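/- arXiv:1207.6432 — 3 statements merged into one kernel-verified Lean document; each statement's English description precedes it below -/
import Mathlib

section
/- Let {Y_n}_{n≥0} be a strictly stationary real-valued process whose shift transformation is ergodic, with common marginal distribution function F_V that is absolutely continuous with continuous density f_V satisfying 0 < f_V(ξ_q) < ∞. Then with probability 1 the sample quantile converges: ξ̂_{n,q} → ξ_q as n → ∞. -/
open MeasureTheory Filter Topology

/-- The sample quantile `ξ̂_{n,q}` of `Y 0, ..., Y (n-1)`: the `j`-th order
statistic where `j - 1 < n q ≤ j`, i.e. `j = ⌈n q⌉`. -/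
noncomputable def sampleQuantile {Ω : Type*} (Y : ℕ → Ω → ℝ) (n : ℕ) (q : ℝ) (ω : Ω) : ℝ :=
  sInf {y : ℝ | ⌈(n : ℝ) * q⌉₊ ≤ ((Finset.range n).filter (fun i => Y i ω ≤ y)).card}

/-- The `q`-quantile of a distribution function `F`: `inf {y | F y ≥ q}`. -/
noncomputable def quantileOf (F : ℝ → ℝ) (q : ℝ) : ℝ :=
  sInf {y : ℝ | q ≤ F y}

/-!
Birkhoff's ergodic theorem, applied to the indicators of `{Y ≤ y}`, makes the empirical
distribution function `F_n` of the orbit `Y ∘ T^[i]` converge almost surely to `F_V`, at every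
point of a countable set at once. For `n > 0` the sample quantile is the `q`-quantile of `F_n`, so
it lies in `[y, y']` as soon as `F_n y < q ≤ F_n y'`. For `y < ξ_q < y'` we have
`F_V y < q < F_V y'`, the right-hand inequality because the density is positive near `ξ_q`;
hence this happens eventually for `y, y'` arbitrarily close to `ξ_q`.

Birkhoff's theorem for bounded observables is derived from the maximal ergodic theorem: if the
`limsup` of the averages exceeded `a > ∫ g` on a set of positive measure, that set would have full
measure by ergodicity, and the maximal inequality applied to `g - a` would give `∫ g ≥ a`.
-/

section PartialSupsBirkhoffSum

variable {α : Type*} {f : α → α} {g : α → ℝ}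

lemma birkhoffSum_le_partialSups_birkhoffSum {n N : ℕ} (h : n ≤ N) (x : α) :
    birkhoffSum f g n x ≤ partialSups (birkhoffSum f g) N x := by
  rw [Pi.partialSups_apply]
  exact le_partialSups_of_le (birkhoffSum f g · x) h

lemma partialSups_birkhoffSum_nonneg (N : ℕ) (x : α) :
    0 ≤ partialSups (birkhoffSum f g) N x :=
  (birkhoffSum_zero f g x).symm.le.trans (birkhoffSum_le_partialSups_birkhoffSum N.zero_le x)

lemma partialSups_birkhoffSum_le_add_apply {N : ℕ} {x : α}
    (hpos : 0 < partialSups (birkhoffSum f g) N x) :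
    partialSups (birkhoffSum f g) N x ≤ g x + partialSups (birkhoffSum f g) N (f x) := by
  rw [Pi.partialSups_apply] at hpos ⊢
  obtain ⟨n, hnN, hn⟩ := exists_partialSups_eq (birkhoffSum f g · x) N
  rw [hn] at hpos ⊢
  cases n with
  | zero => simp at hpos
  | succ m =>
    rw [birkhoffSum_succ']
    gcongr
    exact birkhoffSum_le_partialSups_birkhoffSum (by omega) (f x)

variable [MeasurableSpace α] {μ : Measure α}

lemma measurable_birkhoffSum (hf : Measurable f) (hg : Measurable g) (n : ℕ) :
    Measurable (birkhoffSum f g n) :=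
  Finset.measurable_sum _ fun k _ => hg.comp (hf.iterate k)

lemma integrable_birkhoffSum (hf : MeasurePreserving f μ μ) (hg : Integrable g μ) (n : ℕ) :
    Integrable (birkhoffSum f g n) μ :=
  integrable_finsetSum _ fun k _ => (hf.iterate k).integrable_comp_of_integrable hg

lemma measurable_partialSups_birkhoffSum (hf : Measurable f) (hg : Measurable g) (N : ℕ) :
    Measurable (partialSups (birkhoffSum f g) N) :=
  Finset.measurable_sup' Finset.nonempty_Iic fun n _ => measurable_birkhoffSum hf hg n

lemma integrable_partialSups_birkhoffSum (hf : MeasurePreserving f μ μ) (hg : Integrable g μ)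
    (N : ℕ) : Integrable (partialSups (birkhoffSum f g) N) μ :=
  Finset.sup'_induction Finset.nonempty_Iic (birkhoffSum f g) (p := (Integrable · μ))
    (fun _ h₁ _ h₂ => h₁.sup h₂) fun n _ => integrable_birkhoffSum hf hg n

theorem setIntegral_partialSups_birkhoffSum_pos_nonneg (hf : MeasurePreserving f μ μ)
    (hgm : Measurable g) (hg : Integrable g μ) (N : ℕ) :
    0 ≤ ∫ x in {x | 0 < partialSups (birkhoffSum f g) N x}, g x ∂μ := by
  set M := partialSups (birkhoffSum f g) N
  have hMm : Measurable M := measurable_partialSups_birkhoffSum hf.measurable hgm N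
  have hM : Integrable M μ := integrable_partialSups_birkhoffSum hf hg N
  have hMf : Integrable (M ∘ f) μ := hf.integrable_comp_of_integrable hM
  have hE : MeasurableSet {x | 0 < M x} := measurableSet_lt measurable_const hMm
  have hM_eq : ∫ x in {x | 0 < M x}, M x ∂μ = ∫ x, M x ∂μ :=
    setIntegral_eq_integral_of_forall_compl_eq_zero fun x hx =>
      le_antisymm (not_lt.1 hx) (partialSups_birkhoffSum_nonneg N x)
  have hMf_le : ∫ x in {x | 0 < M x}, M (f x) ∂μ ≤ ∫ x, M (f x) ∂μ :=
    setIntegral_le_integral hMf (.of_forall fun x => partialSups_birkhoffSum_nonneg N (f x))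
  have hMf_eq : ∫ x, M (f x) ∂μ = ∫ x, M x ∂μ := by
    rw [← integral_map hf.measurable.aemeasurable hMm.aestronglyMeasurable, hf.map_eq]
  calc 0 ≤ ∫ x in {x | 0 < M x}, M x ∂μ - ∫ x in {x | 0 < M x}, M (f x) ∂μ := by linarith
    _ = ∫ x in {x | 0 < M x}, (M x - M (f x)) ∂μ :=
        (integral_sub hM.integrableOn hMf.integrableOn).symm
    _ ≤ ∫ x in {x | 0 < M x}, g x ∂μ :=
        setIntegral_mono_on (hM.sub hMf).integrableOn hg.integrableOn hE fun x hx => by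
          linarith [partialSups_birkhoffSum_le_add_apply (f := f) (g := g) hx]

end PartialSupsBirkhoffSum

lemma limsup_add_of_tendsto_zero {ι : Type*} {l : Filter ι} [l.NeBot] {u v : ι → ℝ}
    (hu_le : IsBoundedUnder (· ≤ ·) l u) (hu_ge : IsBoundedUnder (· ≥ ·) l u)
    (hv : Tendsto v l (𝓝 0)) :
    limsup (u + v) l = limsup u l := by
  apply le_antisymm
  · simpa [hv.limsup_eq] using
      limsup_add_le hu_ge hu_le hv.isBoundedUnder_ge.isCoboundedUnder_le hv.isBoundedUnder_le
  · simpa [hv.liminf_eq] using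
      le_limsup_add hu_le hu_ge.isCoboundedUnder_le hv.isBoundedUnder_le hv.isBoundedUnder_ge

section Birkhoff

variable {α : Type*} {f : α → α} {g : α → ℝ} {C : ℝ}

lemma abs_birkhoffAverage_le (hb : ∀ x, |g x| ≤ C) (n : ℕ) (x : α) :
    |birkhoffAverage ℝ f g n x| ≤ C := by
  rcases n.eq_zero_or_pos with rfl | hn
  · simpa using (abs_nonneg _).trans (hb x)
  have hsum : |birkhoffSum f g n x| ≤ n * C :=
    calc |birkhoffSum f g n x| ≤ ∑ k ∈ Finset.range n, |g (f^[k] x)| :=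
          Finset.abs_sum_le_sum_abs _ _
      _ ≤ n * C := by
          simpa using Finset.sum_le_card_nsmul (Finset.range n) _ _ fun k _ => hb (f^[k] x)
  rw [birkhoffAverage, smul_eq_mul, abs_mul, abs_inv, Nat.abs_cast, inv_mul_le_iff₀ (by positivity)]
  exact hsum

lemma isBoundedUnder_le_birkhoffAverage (hb : ∀ x, |g x| ≤ C) (x : α) :
    IsBoundedUnder (· ≤ ·) atTop (birkhoffAverage ℝ f g · x) :=
  isBoundedUnder_of ⟨C, fun n => (abs_le.1 (abs_birkhoffAverage_le hb n x)).2⟩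

lemma isBoundedUnder_ge_birkhoffAverage (hb : ∀ x, |g x| ≤ C) (x : α) :
    IsBoundedUnder (· ≥ ·) atTop (birkhoffAverage ℝ f g · x) :=
  isBoundedUnder_of ⟨-C, fun n => (abs_le.1 (abs_birkhoffAverage_le hb n x)).1⟩

lemma limsup_birkhoffAverage_apply (hb : ∀ x, |g x| ≤ C) (x : α) :
    limsup (birkhoffAverage ℝ f g · (f x)) atTop = limsup (birkhoffAverage ℝ f g · x) atTop := by
  have hbdd : Bornology.IsBounded (Set.range g) :=
    isBounded_iff_forall_norm_le.2 ⟨C, by rintro _ ⟨x, rfl⟩; exact hb x⟩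
  rw [← limsup_add_of_tendsto_zero (isBoundedUnder_le_birkhoffAverage hb x)
    (isBoundedUnder_ge_birkhoffAverage hb x)
    (tendsto_birkhoffAverage_apply_sub_birkhoffAverage' ℝ hbdd f x)]
  congr 1
  ext n
  simp

lemma exists_partialSups_birkhoffSum_sub_const_pos (hb : ∀ x, |g x| ≤ C) {a : ℝ} {x : α}
    (hx : a < limsup (birkhoffAverage ℝ f g · x) atTop) :
    ∃ N, 0 < partialSups (birkhoffSum f (g - fun _ => a)) N x := by
  obtain ⟨n, han, hn⟩ := ((frequently_lt_of_lt_limsup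
    (isBoundedUnder_ge_birkhoffAverage hb x).isCoboundedUnder_le hx).and_eventually
    (eventually_gt_atTop 0)).exists
  have havg : birkhoffAverage ℝ f (g - fun _ => a) n x = birkhoffAverage ℝ f g n x - a := by
    rw [birkhoffAverage_sub, Pi.sub_apply,
      birkhoffAverage_of_comp_eq (R := ℝ) (g := fun _ : α => a) rfl (Nat.cast_ne_zero.2 hn.ne'),
      Pi.sub_apply]
  have hsum : 0 < birkhoffSum f (g - fun _ => a) n x := by
    have : 0 < birkhoffAverage ℝ f (g - fun _ => a) n x := by linarith
    rw [birkhoffAverage, smul_eq_mul] at this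
    exact pos_of_mul_pos_right this (by positivity)
  exact ⟨n, hsum.trans_le (birkhoffSum_le_partialSups_birkhoffSum le_rfl x)⟩

variable [MeasurableSpace α] {μ : Measure α} [IsProbabilityMeasure μ]

lemma ae_limsup_birkhoffAverage_le_of_integral_lt (hf : Ergodic f μ) (hg : Measurable g)
    (hb : ∀ x, |g x| ≤ C) {a : ℝ} (ha : ∫ x, g x ∂μ < a) :
    ∀ᵐ x ∂μ, limsup (birkhoffAverage ℝ f g · x) atTop ≤ a := by
  set A := {x | a < limsup (birkhoffAverage ℝ f g · x) atTop}
  have hA : MeasurableSet A := measurableSet_lt measurable_const <|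
    Measurable.limsup fun n => (measurable_birkhoffSum hf.measurable hg n).const_smul (n : ℝ)⁻¹
  have hA_inv : f ⁻¹' A = A := by
    ext x
    simp [A, limsup_birkhoffAverage_apply hb x]
  rcases hf.ae_empty_or_univ hA hA_inv with hA_null | hA_full
  · filter_upwards [measure_eq_zero_iff_ae_notMem.1 (ae_eq_empty.1 hA_null)] with x hx
    exact not_lt.1 hx
  exfalso
  set h : α → ℝ := g - fun _ => a
  have hg_int : Integrable g μ :=
    .of_bound hg.aestronglyMeasurable C (.of_forall fun x => (Real.norm_eq_abs _).trans_le (hb x))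
  have hh_int : Integrable h μ := hg_int.sub (integrable_const a)
  set E : ℕ → Set α := fun N => {x | 0 < partialSups (birkhoffSum f h) N x}
  have hE : ∀ N, MeasurableSet (E N) := fun N => measurableSet_lt measurable_const
    (measurable_partialSups_birkhoffSum hf.measurable (hg.sub measurable_const) N)
  have hE_mono : Monotone E := fun N N' hN x hx =>
    hx.trans_le ((partialSups_monotone (birkhoffSum f h)) hN x)
  have hA_sub : A ⊆ ⋃ N, E N := fun x hx =>
    Set.mem_iUnion.2 (exists_partialSups_birkhoffSum_sub_const_pos hb hx)
  have hE_full : ⋃ N, E N =ᵐ[μ] Set.univ :=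
    ae_eq_univ.2 (measure_mono_null (Set.compl_subset_compl.2 hA_sub) (ae_eq_univ.1 hA_full))
  have hlim := tendsto_setIntegral_of_monotone hE hE_mono hh_int.integrableOn
  rw [Measure.restrict_congr_set hE_full, Measure.restrict_univ] at hlim
  have hint : ∫ x, h x ∂μ = ∫ x, g x ∂μ - a := by
    simp [h, integral_sub hg_int (integrable_const a)]
  have := ge_of_tendsto' hlim fun N =>
    setIntegral_partialSups_birkhoffSum_pos_nonneg hf.toMeasurePreserving
      (hg.sub measurable_const) hh_int N
  linarith

lemma ae_limsup_birkhoffAverage_le_integral (hf : Ergodic f μ) (hg : Measurable g)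
    (hb : ∀ x, |g x| ≤ C) :
    ∀ᵐ x ∂μ, limsup (birkhoffAverage ℝ f g · x) atTop ≤ ∫ x, g x ∂μ := by
  have h := ae_all_iff.2 fun k : ℕ => ae_limsup_birkhoffAverage_le_of_integral_lt hf hg hb
    (lt_add_of_pos_right (∫ x, g x ∂μ) (Nat.one_div_pos_of_nat (n := k)))
  filter_upwards [h] with x hx
  simpa using ge_of_tendsto' (tendsto_const_nhds.add tendsto_one_div_add_atTop_nhds_zero_nat) hx

theorem ae_tendsto_birkhoffAverage_integral (hf : Ergodic f μ) (hg : Measurable g)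
    (hb : ∀ x, |g x| ≤ C) :
    ∀ᵐ x ∂μ, Tendsto (birkhoffAverage ℝ f g · x) atTop (𝓝 (∫ x, g x ∂μ)) := by
  have hb' : ∀ x, |(-g) x| ≤ C := by simpa using hb
  filter_upwards [ae_limsup_birkhoffAverage_le_integral hf hg hb,
    ae_limsup_birkhoffAverage_le_integral hf hg.neg hb'] with x hup hdown
  simp only [birkhoffAverage_neg, Pi.neg_apply, integral_neg] at hdown
  refine tendsto_order.2 ⟨fun a ha => ?_, fun b hbI =>
    eventually_lt_of_limsup_lt (hup.trans_lt hbI) (isBoundedUnder_le_birkhoffAverage hb x)⟩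
  filter_upwards [eventually_lt_of_limsup_lt (hdown.trans_lt (neg_lt_neg ha))
    (by simpa [birkhoffAverage_neg] using isBoundedUnder_le_birkhoffAverage (f := f) hb' x)]
    with n hn
  simpa [birkhoffAverage_neg] using hn

end Birkhoff

noncomputable def empiricalCDF (Z : ℕ → ℝ) (n : ℕ) (y : ℝ) : ℝ :=
  ((Finset.range n).filter (fun i => Z i ≤ y)).card / n

lemma ceil_mul_le_card_filter_iff {Z : ℕ → ℝ} {n : ℕ} (hn : 0 < n) (q y : ℝ) :
    ⌈(n : ℝ) * q⌉₊ ≤ ((Finset.range n).filter (fun i => Z i ≤ y)).card ↔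
      q ≤ empiricalCDF Z n y := by
  rw [Nat.ceil_le, empiricalCDF, le_div_iff₀ (by positivity), mul_comm]

lemma sampleQuantile_eq_quantileOf_empiricalCDF {Ω : Type*} (Y : ℕ → Ω → ℝ) {n : ℕ} (hn : 0 < n)
    (q : ℝ) (ω : Ω) : sampleQuantile Y n q ω = quantileOf (empiricalCDF (Y · ω) n) q := by
  simp only [sampleQuantile, quantileOf, ceil_mul_le_card_filter_iff hn]

lemma monotone_empiricalCDF (Z : ℕ → ℝ) (n : ℕ) : Monotone (empiricalCDF Z n) := fun y y' h => by
  unfold empiricalCDF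
  gcongr

lemma empiricalCDF_iterate_eq_birkhoffAverage {α : Type*} (f : α → α) (Y : α → ℝ) (n : ℕ)
    (y : ℝ) (x : α) :
    empiricalCDF (fun i => Y (f^[i] x)) n y =
      birkhoffAverage ℝ f ({x | Y x ≤ y}.indicator 1) n x := by
  simp [empiricalCDF, birkhoffAverage, birkhoffSum, Set.indicator_apply, div_eq_inv_mul]

theorem ae_tendsto_empiricalCDF {α : Type*} [MeasurableSpace α] {μ : Measure α}
    [IsProbabilityMeasure μ] {f : α → α} (hf : Ergodic f μ) {Y : α → ℝ} (hY : Measurable Y)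
    (y : ℝ) :
    ∀ᵐ x ∂μ, Tendsto (fun n => empiricalCDF (fun i => Y (f^[i] x)) n y) atTop
      (𝓝 (μ.real {x | Y x ≤ y})) := by
  have hs : MeasurableSet {x | Y x ≤ y} := hY measurableSet_Iic
  have hb : ∀ x, |{x | Y x ≤ y}.indicator (1 : α → ℝ) x| ≤ 1 := fun x => by
    by_cases hx : x ∈ {x | Y x ≤ y} <;> simp [hx]
  have hlim := ae_tendsto_birkhoffAverage_integral hf (measurable_one.indicator hs) hb
  rw [integral_indicator_one hs] at hlim
  simpa only [empiricalCDF_iterate_eq_birkhoffAverage] using hlim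

section Quantile

variable {F : ℝ → ℝ} {q a b y : ℝ}

lemma quantileOf_le (hF : Monotone F) (ha : F a < q) (hy : q ≤ F y) : quantileOf F q ≤ y :=
  csInf_le ⟨a, fun _ hz => le_of_not_gt fun hza => (hz.trans (hF hza.le)).not_gt ha⟩ hy

lemma le_quantileOf (hF : Monotone F) (hb : q ≤ F b) (hy : F y < q) : y ≤ quantileOf F q :=
  le_csInf ⟨b, hb⟩ fun _ hz => le_of_not_gt fun hzy => (hz.trans (hF hzy.le)).not_gt hy

lemma quantileOf_mem_Icc (hF : Monotone F) (ha : F a < q) (hb : q ≤ F b) :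
    quantileOf F q ∈ Set.Icc a b :=
  ⟨le_quantileOf hF hb ha, quantileOf_le hF ha hb⟩

lemma apply_lt_of_lt_quantileOf (hF : Monotone F) (ha : F a < q) (hy : y < quantileOf F q) :
    F y < q :=
  lt_of_not_ge fun h => (quantileOf_le hF ha h).not_gt hy

lemma StieltjesFunction.le_apply_quantileOf (F : StieltjesFunction ℝ) (hb : q ≤ F b) :
    q ≤ F (quantileOf F q) := by
  have hright : ∀ᶠ y in 𝓝[>] quantileOf F q, q ≤ F y := by
    filter_upwards [self_mem_nhdsWithin] with y hy
    obtain ⟨z, hz, hzy⟩ := exists_lt_of_csInf_lt ⟨b, hb⟩ hy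
    exact hz.trans (F.mono hzy.le)
  exact ge_of_tendsto ((F.right_continuous _).mono Set.Ioi_subset_Ici_self) hright

end Quantile

namespace ProbabilityTheory

variable {μ : Measure ℝ} {f : ℝ → ℝ}

lemma integrableOn_Iic_of_cdf_eq_integral (hcdf : ∀ y, cdf μ y = ∫ t in Set.Iic y, f t)
    (y : ℝ) : IntegrableOn f (Set.Iic y) := by
  obtain ⟨z, hz, hyz⟩ := (((tendsto_cdf_atTop μ).eventually (eventually_gt_nhds one_pos)).and
    (eventually_ge_atTop y)).exists
  have hz_int : IntegrableOn f (Set.Iic z) := .of_integral_ne_zero (by rw [← hcdf]; exact hz.ne')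
  exact hz_int.mono_set (Set.Iic_subset_Iic.2 hyz)

lemma cdf_lt_cdf_of_pos_density (hcdf : ∀ y, cdf μ y = ∫ t in Set.Iic y, f t) {x y : ℝ}
    (hfx : ContinuousAt f x) (hpos : 0 < f x) (hxy : x < y) : cdf μ x < cdf μ y := by
  obtain ⟨l, u, ⟨hlx, hxu⟩, hsub⟩ :=
    mem_nhds_iff_exists_Ioo_subset.1 (hfx.eventually (lt_mem_nhds hpos))
  have hxz : x < min u y := lt_min hxu hxy
  have hint := integrableOn_Iic_of_cdf_eq_integral hcdf
  have hincr : cdf μ (min u y) - cdf μ x = ∫ t in x..min u y, f t := by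
    rw [hcdf, hcdf]
    exact intervalIntegral.integral_Iic_sub_Iic (hint x) (hint _)
  have hpos_int : 0 < ∫ t in x..min u y, f t :=
    intervalIntegral.intervalIntegral_pos_of_pos_on
      ((intervalIntegrable_iff_integrableOn_Ioc_of_le hxz.le).2
        ((hint _).mono_set Set.Ioc_subset_Iic_self))
      (fun t ht => hsub ⟨hlx.trans ht.1, ht.2.trans_le (min_le_left _ _)⟩) hxz
  linarith [monotone_cdf μ (min_le_right u y)]

end ProbabilityTheory

open ProbabilityTheory

theorem sampleQuantile_tendsto_quantile_general
    {Ω : Type*} [MeasurableSpace Ω] (P : Measure Ω) [IsProbabilityMeasure P]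
    (T : Ω → Ω) (hT : Ergodic T P)
    (Y : Ω → ℝ) (hY : Measurable Y)
    (q : ℝ) (hq0 : 0 < q) (hq1 : q < 1)
    (FV : ℝ → ℝ) (hFV : ∀ y, FV y = (P {ω | Y ω ≤ y}).toReal)
    (fV : ℝ → ℝ) (hfc : Continuous fV)
    (hcdf : ∀ y, FV y = ∫ t in Set.Iic y, fV t)
    (ξ : ℝ) (hξ : ξ = quantileOf FV q)
    (hfpos : 0 < fV ξ) :
    ∀ᵐ ω ∂P,
      Tendsto (fun n : ℕ => sampleQuantile (fun i ω' => Y (T^[i] ω')) n q ω) atTop (𝓝 ξ) := by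
  have : IsProbabilityMeasure (P.map Y) := Measure.isProbabilityMeasure_map hY.aemeasurable
  have hF : ∀ y, P.real {ω | Y ω ≤ y} = cdf (P.map Y) y := fun y => by
    rw [cdf_eq_real, map_measureReal_apply hY measurableSet_Iic]
    rfl
  obtain rfl : FV = cdf (P.map Y) := funext fun y => (hFV y).trans (hF y)
  obtain ⟨a, ha⟩ := ((tendsto_cdf_atBot _).eventually (eventually_lt_nhds hq0)).exists
  obtain ⟨b, hb⟩ := ((tendsto_cdf_atTop _).eventually (eventually_gt_nhds hq1)).exists
  have hbelow : ∀ y < ξ, cdf (P.map Y) y < q := fun y hy =>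
    apply_lt_of_lt_quantileOf (monotone_cdf _) ha (hξ ▸ hy)
  have habove : ∀ y > ξ, q < cdf (P.map Y) y := fun y hy =>
    (hξ ▸ (cdf (P.map Y)).le_apply_quantileOf hb.le).trans_lt
      (cdf_lt_cdf_of_pos_density hcdf hfc.continuousAt hfpos hy)
  have hae := ae_all_iff.2 fun k : ℕ => (ae_tendsto_empiricalCDF hT hY (ξ - 1 / (k + 1))).and
    (ae_tendsto_empiricalCDF hT hY (ξ + 1 / (k + 1)))
  filter_upwards [hae] with ω hω
  refine Metric.nhds_basis_closedBall_inv_nat_succ.tendsto_right_iff.2 fun k _ => ?_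
  obtain ⟨hlo, hhi⟩ := hω k
  rw [hF] at hlo hhi
  filter_upwards
    [hlo.eventually (eventually_lt_nhds (hbelow _ (sub_lt_self _ Nat.one_div_pos_of_nat))),
    hhi.eventually (eventually_gt_nhds (habove _ (lt_add_of_pos_right _ Nat.one_div_pos_of_nat))),
    eventually_gt_atTop 0] with n hn_lo hn_hi hn
  rw [Real.closedBall_eq_Icc, sampleQuantile_eq_quantileOf_empiricalCDF _ hn]
  exact quantileOf_mem_Icc (monotone_empiricalCDF _ _) hn_lo hn_hi.le

/-- For a strictly stationary process `Yₙ = Y₀ ∘ Tⁿ` with `T` ergodic, whose common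
marginal distribution function `F_V` is absolutely continuous with continuous density
`f_V` satisfying `0 < f_V(ξ_q)`, the sample quantile converges almost surely to `ξ_q`. -/
theorem sampleQuantile_tendsto_quantile
    {Ω : Type*} [MeasurableSpace Ω] (P : Measure Ω) [IsProbabilityMeasure P]
    (T : Ω → Ω) (hT : Ergodic T P)
    (Y : Ω → ℝ) (hY : Measurable Y)
    (q : ℝ) (hq0 : 0 < q) (hq1 : q < 1)
    (FV : ℝ → ℝ) (hFV : ∀ y, FV y = (P {ω | Y ω ≤ y}).toReal)
    (fV : ℝ → ℝ) (hfc : Continuous fV) (hfnn : ∀ t, 0 ≤ fV t)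
    (hcdf : ∀ y, FV y = ∫ t in Set.Iic y, fV t)
    (ξ : ℝ) (hξ : ξ = quantileOf FV q)
    (hfpos : 0 < fV ξ) :
    ∀ᵐ ω ∂P,
      Tendsto (fun n : ℕ => sampleQuantile (fun i ω' => Y (T^[i] ω')) n q ω) atTop (𝓝 ξ) :=
  sampleQuantile_tendsto_quantile_general P T hT Y hY q hq0 hq1 FV hFV fV hfc hcdf ξ hξ hfpos
end

section
/- Suppose the Markov chain X is polynomially ergodic of order m > 1 and satisfies the minorization P(x,A) ≥ s(x)Q(A) with E_π s > 0. Then the function y ↦ σ²(y) = Var_π I(Y_0 ≤ y) + 2 Σ_{k=1}^∞ Cov_π[I(Y_0 ≤ y), I(Y_k ≤ y)] is continuous at ξ_q. -/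
/-!
In fact `σ²` is continuous everywhere. By stationarity every `Y n` has distribution function
`F_V`, which is continuous as the primitive of the continuous density `f_V`; the joint
distribution function `y ↦ P(Y₀ ≤ y, Y_k ≤ y)` has increments at most twice those of `F_V`, so
every covariance term is continuous in `y`. The law of `(X₀, X_k)` is `π ⊗ P^k`, so with
`A = {g ≤ y}` the `k`-th covariance is `∫_A (P^k(x, A) - π(A)) dπ(x)`, bounded by
`E_π M · k^{-m}` uniformly in `y`. Since `m > 1` these bounds are summable, and the series
converges uniformly.
-/

open MeasureTheory ProbabilityTheory Filter Topology

/-- Total variation norm `‖μ - ν‖ = sup_A |μ(A) - ν(A)|` (sup over measurable sets). -/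
noncomputable def tvDist {𝒳 : Type*} [MeasurableSpace 𝒳] (μ ν : Measure 𝒳) : ℝ :=
  ⨆ A : {s : Set 𝒳 // MeasurableSet s}, |(μ A.1).toReal - (ν A.1).toReal|

/-- The `n`-step kernel `P^n` of a Markov kernel. -/
noncomputable def kpow {𝒳 : Type*} [MeasurableSpace 𝒳] (κ : Kernel 𝒳 𝒳) : ℕ → Kernel 𝒳 𝒳
  | 0 => Kernel.id
  | n + 1 => κ.comp (kpow κ n)

/-- `X` is a Markov chain on `Ω` with transition kernel `κ`: for each `n`, the joint
law of `(X 0, ..., X n, X (n+1))` is the law of `(X 0, ..., X n)` composed with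
`κ` applied to the last coordinate. -/
def IsMarkovChain {𝒳 Ω : Type*} [MeasurableSpace 𝒳] [MeasurableSpace Ω]
    (P : Measure Ω) (κ : Kernel 𝒳 𝒳) (X : ℕ → Ω → 𝒳) : Prop :=
  ∀ n : ℕ, P.map (fun ω => ((fun i : Fin (n + 1) => X i ω), X (n + 1) ω)) =
    (P.map (fun ω (i : Fin (n + 1)) => X i ω)).bind
      (fun v => (κ (v (Fin.last n))).map (fun x => (v, x)))

/-- Polynomial ergodicity of order `m`: `‖P^n(x,·) - π‖ ≤ M(x) n^{-m}` for a
`π`-integrable nonnegative `M`. -/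
def PolyErgodic {𝒳 : Type*} [MeasurableSpace 𝒳] (κ : Kernel 𝒳 𝒳) (π : Measure 𝒳)
    (m : ℝ) : Prop :=
  ∃ M : 𝒳 → ℝ, Measurable M ∧ (∀ x, 0 ≤ M x) ∧ Integrable M π ∧
    ∀ x : 𝒳, ∀ n : ℕ, 1 ≤ n → tvDist ((kpow κ n) x) π ≤ M x * (n : ℝ) ^ (-m)

/-- The asymptotic variance
`σ²(y) = Var_π I(Y₀ ≤ y) + 2 ∑_{k≥1} Cov_π[I(Y₀ ≤ y), I(Y_k ≤ y)]`
of a stationary process `Y`. -/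
noncomputable def sigmaSqFn {Ω : Type*} [MeasurableSpace Ω] (P : Measure Ω)
    (Y : ℕ → Ω → ℝ) (y : ℝ) : ℝ :=
  ((P {ω | Y 0 ω ≤ y}).toReal - ((P {ω | Y 0 ω ≤ y}).toReal) ^ 2) +
    2 * ∑' k : ℕ, ((P {ω | Y 0 ω ≤ y ∧ Y (k + 1) ω ≤ y}).toReal -
      (P {ω | Y 0 ω ≤ y}).toReal * (P {ω | Y (k + 1) ω ≤ y}).toReal)

section Kernel

variable {𝒳 : Type*} [MeasurableSpace 𝒳]

instance isMarkovKernel_kpow (κ : Kernel 𝒳 𝒳) [IsMarkovKernel κ] (n : ℕ) :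
    IsMarkovKernel (kpow κ n) := by
  induction n with
  | zero => rw [kpow]; infer_instance
  | succ n ih => rw [kpow]; infer_instance

lemma kpow_comp_eq_of_comp_eq (κ : Kernel 𝒳 𝒳) {π : Measure 𝒳} (hinv : κ ∘ₘ π = π) (n : ℕ) :
    kpow κ n ∘ₘ π = π := by
  induction n with
  | zero => rw [kpow, Measure.id_comp]
  | succ n ih => rw [kpow, ← Measure.comp_assoc, ih, hinv]

lemma abs_measureReal_sub_le_tvDist (μ ν : Measure 𝒳) [IsProbabilityMeasure μ]
    [IsProbabilityMeasure ν] {A : Set 𝒳} (hA : MeasurableSet A) :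
    |μ.real A - ν.real A| ≤ tvDist μ ν := by
  refine le_ciSup (f := fun B : {s : Set 𝒳 // MeasurableSet s} =>
    |(μ B.1).toReal - (ν B.1).toReal|) ⟨1, ?_⟩ ⟨A, hA⟩
  rintro r ⟨B, rfl⟩
  exact abs_sub_le_of_nonneg_of_le measureReal_nonneg measureReal_le_one
    measureReal_nonneg measureReal_le_one

lemma tvDist_nonneg (μ ν : Measure 𝒳) [IsProbabilityMeasure μ] [IsProbabilityMeasure ν] :
    0 ≤ tvDist μ ν :=
  (abs_nonneg _).trans (abs_measureReal_sub_le_tvDist μ ν MeasurableSet.empty)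

lemma abs_measureReal_compProd_prod_sub_mul_le (π : Measure 𝒳) [IsProbabilityMeasure π]
    (η : Kernel 𝒳 𝒳) [IsMarkovKernel η] {M : 𝒳 → ℝ} (hM : Integrable M π)
    (hηM : ∀ x, tvDist (η x) π ≤ M x) {A B : Set 𝒳} (hA : MeasurableSet A)
    (hB : MeasurableSet B) :
    |(π ⊗ₘ η).real (A ×ˢ B) - π.real A * π.real B| ≤ ∫ x, M x ∂π := by
  have hjoint : (π ⊗ₘ η).real (A ×ˢ B) = ∫ x in A, (η x).real B ∂π := by
    rw [measureReal_def, Measure.compProd_apply_prod hA hB, ← integral_toReal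
      (η.measurable_coe hB).aemeasurable.restrict (ae_of_all _ fun x => measure_lt_top _ _)]
    rfl
  have hprod : π.real A * π.real B = ∫ _ in A, π.real B ∂π := by
    rw [setIntegral_const, smul_eq_mul]
  have hint : Integrable (fun x => (η x).real B) (π.restrict A) :=
    (integrable_const 1).mono' (η.measurable_coe hB).ennreal_toReal.aestronglyMeasurable
      (ae_of_all _ fun x => by
        rw [Real.norm_of_nonneg measureReal_nonneg]; exact measureReal_le_one)
  have hM0 : ∀ x, 0 ≤ M x := fun x => (tvDist_nonneg _ _).trans (hηM x)
  calc |(π ⊗ₘ η).real (A ×ˢ B) - π.real A * π.real B|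
      = |∫ x in A, ((η x).real B - π.real B) ∂π| := by
        rw [hjoint, hprod, integral_sub hint (integrable_const _)]
    _ ≤ ∫ x in A, |(η x).real B - π.real B| ∂π := abs_integral_le_integral_abs
    _ ≤ ∫ x in A, M x ∂π :=
        setIntegral_mono_on (hint.sub (integrable_const _)).abs hM.restrict hA
          fun x _ => (abs_measureReal_sub_le_tvDist _ _ hB).trans (hηM x)
    _ ≤ ∫ x, M x ∂π := setIntegral_le_integral hM (ae_of_all _ hM0)

end Kernel

lemma MeasureTheory.Measure.map_compProd_comap {α β γ δ : Type*} [MeasurableSpace α]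
    [MeasurableSpace β] [MeasurableSpace γ] [MeasurableSpace δ] (μ : Measure α) [SFinite μ] (κ : Kernel β γ)
    [IsSFiniteKernel κ] {f : α → β} (hf : Measurable f) {g : α → δ} (hg : Measurable g) :
    (μ ⊗ₘ κ.comap f hf).map (Prod.map g id) = (Kernel.id ∥ₖ κ) ∘ₘ μ.map (fun a => (g a, f a)) := by
  rw [Measure.compProd_eq_comp_prod, Measure.map_comp _ _ (hg.prodMap measurable_id),
    ← Measure.deterministic_comp_eq_map (hg.prodMk hf), Measure.comp_assoc,
    Kernel.comp_deterministic_eq_comap]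
  congr 1
  ext a : 1
  rw [Kernel.map_apply _ (hg.prodMap measurable_id), Kernel.prod_apply, Kernel.comap_apply,
    Kernel.comap_apply, Kernel.parallelComp_apply, Kernel.id_apply, Kernel.id_apply,
    ← Measure.map_prod_map _ _ hg measurable_id, Measure.map_dirac' hg, Measure.map_id]

namespace IsMarkovChain

variable {𝒳 Ω : Type*} [MeasurableSpace 𝒳] [MeasurableSpace Ω] {P : Measure Ω} [SFinite P]
  {κ : Kernel 𝒳 𝒳} [IsMarkovKernel κ] {X : ℕ → Ω → 𝒳}

lemma map_path_prod_eq_compProd (hchain : IsMarkovChain P κ X) (n : ℕ) :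
    P.map (fun ω => ((fun i : Fin (n + 1) => X i ω), X (n + 1) ω)) =
      P.map (fun ω (i : Fin (n + 1)) => X i ω) ⊗ₘ
        κ.comap (fun v => v (Fin.last n)) (measurable_pi_apply _) := by
  rw [hchain n, Measure.compProd_eq_comp_prod]
  congr 1
  funext v
  rw [Kernel.prod_apply, Kernel.id_apply, Kernel.comap_apply, Measure.dirac_prod]

lemma map_prod_eq_compProd_kpow (hchain : IsMarkovChain P κ X) (hXm : ∀ n, Measurable (X n))
    (n : ℕ) : P.map (fun ω => (X 0 ω, X n ω)) = P.map (X 0) ⊗ₘ kpow κ n := by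
  induction n with
  | zero =>
    rw [kpow, Measure.compProd_id, Measure.map_map measurable_diag (hXm 0)]
    rfl
  | succ n ih =>
    have hpath : Measurable (fun ω (i : Fin (n + 1)) => X i ω) :=
      measurable_pi_lambda _ fun i => hXm i
    have hfirst : Measurable (fun v : Fin (n + 1) → 𝒳 => v 0) := measurable_pi_apply 0
    calc P.map (fun ω => (X 0 ω, X (n + 1) ω))
        = (P.map (fun ω => ((fun i : Fin (n + 1) => X i ω), X (n + 1) ω))).map
            (Prod.map (fun v => v 0) id) := by
          rw [Measure.map_map (hfirst.prodMap measurable_id) (hpath.prodMk (hXm _))]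
          rfl
      _ = (Kernel.id ∥ₖ κ) ∘ₘ P.map (fun ω => (X 0 ω, X n ω)) := by
          rw [hchain.map_path_prod_eq_compProd, Measure.map_compProd_comap _ _ _ hfirst,
            Measure.map_map (hfirst.prodMk (measurable_pi_apply _)) hpath]
          rfl
      _ = P.map (X 0) ⊗ₘ kpow κ (n + 1) := by
          rw [ih, Measure.parallelComp_comp_compProd, kpow]

lemma map_eq_kpow_comp (hchain : IsMarkovChain P κ X) (hXm : ∀ n, Measurable (X n)) (n : ℕ) :
    P.map (X n) = kpow κ n ∘ₘ P.map (X 0) := by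
  rw [← Measure.snd_compProd, ← hchain.map_prod_eq_compProd_kpow hXm, Measure.snd,
    Measure.map_map measurable_snd ((hXm 0).prodMk (hXm n))]
  rfl

lemma map_eq_of_comp_eq (hchain : IsMarkovChain P κ X) (hXm : ∀ n, Measurable (X n))
    {π : Measure 𝒳} (hX0 : P.map (X 0) = π) (hinv : κ ∘ₘ π = π) (n : ℕ) : P.map (X n) = π := by
  rw [hchain.map_eq_kpow_comp hXm, hX0, kpow_comp_eq_of_comp_eq κ hinv]

lemma abs_measureReal_inter_sub_mul_le (hchain : IsMarkovChain P κ X)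
    (hXm : ∀ n, Measurable (X n)) {π : Measure 𝒳} [IsProbabilityMeasure π]
    (hX0 : P.map (X 0) = π) (hinv : κ ∘ₘ π = π) {M : 𝒳 → ℝ} (hM : Integrable M π) {n : ℕ}
    (hMn : ∀ x, tvDist (kpow κ n x) π ≤ M x) {A B : Set 𝒳} (hA : MeasurableSet A)
    (hB : MeasurableSet B) :
    |P.real (X 0 ⁻¹' A ∩ X n ⁻¹' B) - P.real (X 0 ⁻¹' A) * P.real (X n ⁻¹' B)| ≤
      ∫ x, M x ∂π := by
  have hpair : X 0 ⁻¹' A ∩ X n ⁻¹' B = (fun ω => (X 0 ω, X n ω)) ⁻¹' (A ×ˢ B) := rfl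
  rw [← map_measureReal_apply (hXm 0) hA, ← map_measureReal_apply (hXm n) hB,
    hX0, hchain.map_eq_of_comp_eq hXm hX0 hinv n, hpair,
    ← map_measureReal_apply ((hXm 0).prodMk (hXm n)) (hA.prod hB),
    hchain.map_prod_eq_compProd_kpow hXm, hX0]
  exact abs_measureReal_compProd_prod_sub_mul_le π _ hM hMn hA hB

end IsMarkovChain

lemma continuous_integral_Iic {f : ℝ → ℝ} (hf : Continuous f) :
    Continuous fun y => ∫ t in Set.Iic y, f t := by
  have hiff : ∀ a, IntegrableOn f (Set.Iic a) ↔ IntegrableAtFilter f atBot :=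
    fun a => integrableOn_Iic_iff_integrableAtFilter_atBot.trans
      (and_iff_left (hf.locallyIntegrable.locallyIntegrableOn _))
  by_cases hbot : IntegrableAtFilter f atBot
  · have hprim : (fun y => ∫ t in Set.Iic y, f t) =
        fun y => (∫ t in Set.Iic 0, f t) + ∫ t in (0 : ℝ)..y, f t := by
      funext y
      rw [← intervalIntegral.integral_Iic_sub_Iic ((hiff 0).2 hbot) ((hiff y).2 hbot)]
      ring
    rw [hprim]
    exact continuous_const.add
      (intervalIntegral.continuous_primitive (fun a b => hf.intervalIntegrable a b) 0)
  · have hzero : (fun y => ∫ t in Set.Iic y, f t) = fun _ => 0 :=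
      funext fun y => integral_undef fun hy => hbot ((hiff y).1 hy)
    rw [hzero]
    exact continuous_const

lemma Monotone.continuous_of_sub_le_sub {J G : ℝ → ℝ} (hJ : Monotone J) (hG : Continuous G)
    (hJG : ∀ z y, z ≤ y → J y - J z ≤ G y - G z) : Continuous J := by
  have habs : ∀ y a, ‖J y - J a‖ ≤ ‖G y - G a‖ := by
    intro y a
    rcases le_total a y with hay | hya
    · have hJ0 := sub_nonneg.2 (hJ hay)
      rw [Real.norm_of_nonneg hJ0, Real.norm_of_nonneg (hJ0.trans (hJG a y hay))]
      exact hJG a y hay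
    · have hJ0 := sub_nonneg.2 (hJ hya)
      rw [norm_sub_rev, norm_sub_rev (G y), Real.norm_of_nonneg hJ0,
        Real.norm_of_nonneg (hJ0.trans (hJG y a hya))]
      exact hJG y a hya
  refine continuous_iff_continuousAt.2 fun a => tendsto_iff_norm_sub_tendsto_zero.2 ?_
  exact squeeze_zero (fun _ => norm_nonneg _) (fun y => habs y a)
    (tendsto_iff_norm_sub_tendsto_zero.1 (hG.tendsto a))

lemma measureReal_inter_sub_le_sub {α : Type*} [MeasurableSpace α] {μ : Measure α}
    [IsFiniteMeasure μ] {s t : Set α} (hts : t ⊆ s) (ht : MeasurableSet t) (u : Set α) :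
    μ.real (s ∩ u) - μ.real (t ∩ u) ≤ μ.real s - μ.real t := by
  have hcover : s ∩ u ⊆ (t ∩ u) ∪ (s \ t) := fun x hx => by
    by_cases hxt : x ∈ t
    · exact Or.inl ⟨hxt, hx.2⟩
    · exact Or.inr ⟨hx.1, hxt⟩
  have := (measureReal_mono hcover).trans (measureReal_union_le (μ := μ) _ _)
  rw [measureReal_sdiff hts ht] at this
  linarith

lemma continuous_measureReal_le_and_le {Ω : Type*} [MeasurableSpace Ω] (μ : Measure Ω)
    [IsFiniteMeasure μ] {U V : Ω → ℝ} (hU : Measurable U) (hV : Measurable V)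
    (hUc : Continuous fun y => μ.real {ω | U ω ≤ y})
    (hVc : Continuous fun y => μ.real {ω | V ω ≤ y}) :
    Continuous fun y => μ.real {ω | U ω ≤ y ∧ V ω ≤ y} := by
  refine Monotone.continuous_of_sub_le_sub
    (fun z y hzy => measureReal_mono fun ω hω => ⟨hω.1.trans hzy, hω.2.trans hzy⟩)
    (hUc.add hVc) fun z y hzy => ?_
  have hsubU : {ω | U ω ≤ z} ⊆ {ω | U ω ≤ y} := fun ω hω => le_trans hω hzy
  have hsubV : {ω | V ω ≤ z} ⊆ {ω | V ω ≤ y} := fun ω hω => le_trans hω hzy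
  -- telescope: first move the threshold of `U`, then that of `V`
  have hstepU := measureReal_inter_sub_le_sub (μ := μ) hsubU (hU measurableSet_Iic)
    {ω | V ω ≤ y}
  have hstepV := measureReal_inter_sub_le_sub (μ := μ) hsubV (hV measurableSet_Iic)
    {ω | U ω ≤ z}
  rw [Set.inter_comm {ω | V ω ≤ y}, Set.inter_comm {ω | V ω ≤ z}] at hstepV
  change μ.real ({ω | U ω ≤ y} ∩ {ω | V ω ≤ y}) - μ.real ({ω | U ω ≤ z} ∩ {ω | V ω ≤ z}) ≤
    (μ.real {ω | U ω ≤ y} + μ.real {ω | V ω ≤ y}) - (μ.real {ω | U ω ≤ z} + μ.real {ω | V ω ≤ z})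
  linarith

theorem sigmaSq_continuousAt_of_polyErgodic_general
    {𝒳 Ω : Type*} [MeasurableSpace 𝒳] [MeasurableSpace Ω]
    (κ : Kernel 𝒳 𝒳) [IsMarkovKernel κ]
    (π : Measure 𝒳) [IsProbabilityMeasure π]
    (hinv : π.bind (fun x => κ x) = π)
    (P : Measure Ω) [IsProbabilityMeasure P]
    (X : ℕ → Ω → 𝒳) (hXm : ∀ n, Measurable (X n))
    (hX0 : P.map (X 0) = π) (hchain : IsMarkovChain P κ X)
    (m : ℝ) (hm : 1 < m) (hpoly : PolyErgodic κ π m)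
    (g : 𝒳 → ℝ) (hg : Measurable g)
    (Y : ℕ → Ω → ℝ) (hYdef : ∀ n ω, Y n ω = g (X n ω))
    (FV : ℝ → ℝ) (hFV : ∀ y, FV y = (π {x | g x ≤ y}).toReal)
    (fV : ℝ → ℝ) (hfc : Continuous fV)
    (hcdf : ∀ y, FV y = ∫ t in Set.Iic y, fV t)
    (ξ : ℝ) :
    ContinuousAt (sigmaSqFn P Y) ξ := by
  obtain ⟨M, -, -, hMint, hMn⟩ := hpoly
  obtain rfl : Y = fun n ω => g (X n ω) := funext fun n => funext (hYdef n)
  have hFVc : Continuous FV := funext hcdf ▸ continuous_integral_Iic hfc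
  have hcdfc : ∀ n, Continuous fun y => P.real {ω | g (X n ω) ≤ y} := fun n => by
    convert hFVc using 2 with y
    rw [hFV, ← hchain.map_eq_of_comp_eq hXm hX0 hinv n, ← measureReal_def]
    exact (map_measureReal_apply (hXm n) (hg measurableSet_Iic)).symm
  have hcov : ∀ k y, ‖P.real {ω | g (X 0 ω) ≤ y ∧ g (X (k + 1) ω) ≤ y} -
      P.real {ω | g (X 0 ω) ≤ y} * P.real {ω | g (X (k + 1) ω) ≤ y}‖ ≤
        (∫ x, M x ∂π) * ((k + 1 : ℕ) : ℝ) ^ (-m) := fun k y => by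
    rw [Real.norm_eq_abs, ← integral_mul_const]
    exact hchain.abs_measureReal_inter_sub_mul_le hXm hX0 hinv (hMint.mul_const _)
      (fun x => hMn x (k + 1) k.succ_pos) (hg measurableSet_Iic) (hg measurableSet_Iic)
  have hsum : Summable fun k : ℕ => (∫ x, M x ∂π) * ((k + 1 : ℕ) : ℝ) ^ (-m) :=
    ((summable_nat_add_iff 1).2 (Real.summable_nat_rpow.2 (by linarith))).mul_left _
  have hterm (k : ℕ) := (continuous_measureReal_le_and_le P (hg.comp (hXm 0))
    (hg.comp (hXm (k + 1))) (hcdfc 0) (hcdfc (k + 1))).sub ((hcdfc 0).mul (hcdfc (k + 1)))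
  exact (((hcdfc 0).sub ((hcdfc 0).pow 2)).add
    (continuous_const.mul (continuous_tsum hterm hsum hcov))).continuousAt

theorem sigmaSq_continuousAt_of_polyErgodic
    {𝒳 Ω : Type*} [MeasurableSpace 𝒳] [MeasurableSpace Ω]
    (κ : Kernel 𝒳 𝒳) [IsMarkovKernel κ]
    (π : Measure 𝒳) [IsProbabilityMeasure π]
    (hinv : π.bind (fun x => κ x) = π)
    (P : Measure Ω) [IsProbabilityMeasure P]
    (X : ℕ → Ω → 𝒳) (hXm : ∀ n, Measurable (X n))
    (hX0 : P.map (X 0) = π) (hchain : IsMarkovChain P κ X)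
    (m : ℝ) (hm : 1 < m) (hpoly : PolyErgodic κ π m)
    -- minorization: P(x, A) ≥ s(x) Q(A) with E_π s > 0
    (s : 𝒳 → ℝ) (hsm : Measurable s) (hs0 : ∀ x, 0 ≤ s x) (hs1 : ∀ x, s x ≤ 1)
    (Q : Measure 𝒳) [IsProbabilityMeasure Q]
    (hspos : 0 < ∫ x, s x ∂π)
    (hminor : ∀ x : 𝒳, ∀ A : Set 𝒳, MeasurableSet A →
      ENNReal.ofReal (s x) * Q A ≤ κ x A)
    (g : 𝒳 → ℝ) (hg : Measurable g)
    (Y : ℕ → Ω → ℝ) (hYdef : ∀ n ω, Y n ω = g (X n ω))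
    (q : ℝ) (hq0 : 0 < q) (hq1 : q < 1)
    (FV : ℝ → ℝ) (hFV : ∀ y, FV y = (π {x | g x ≤ y}).toReal)
    (fV : ℝ → ℝ) (hfc : Continuous fV) (hfnn : ∀ t, 0 ≤ fV t)
    (hcdf : ∀ y, FV y = ∫ t in Set.Iic y, fV t)
    (ξ : ℝ) (hξ : ξ = quantileOf FV q) (hfpos : 0 < fV ξ) :
    ContinuousAt (sigmaSqFn P Y) ξ :=
  sigmaSq_continuousAt_of_polyErgodic_general κ π hinv P X hXm hX0 hchain m hm hpoly g hg Y hYdef FV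
    hFV fV hfc hcdf ξ
end

section
/- Let q(x) = (2/(π√3)) (1 + x²/3)^{−2} be the density of Student's t distribution with 3 degrees of freedom and f(x) = (3/8) (1 + x²/4)^{−5/2} the density of Student's t distribution with 4 degrees of freedom. Then for all x ∈ ℝ, q(x)/f(x) ≥ √9375/(32π); equivalently q(x) ≥ (√9375/(32π)) f(x) for all x ∈ ℝ. -/
/-!
The ratio q/f is a constant multiple of (1 + x²/4)^{5/2} / (1 + x²/3)². With s = x² − 1
we have 1 + x²/3 = (4/3)(1 + s/4) and 1 + x²/4 = (5/4)(1 + s/5), and (1 + s/4)² ≤ (1 + s/5)^{5/2}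
is the square root of (1 + s/4)⁴ ≤ (1 + s/5)⁵, the monotonicity of n ↦ (1 + s/n)ⁿ, which follows
from concavity of y ↦ y^{n/(n+1)}. So the ratio is minimal at x² = 1, where it equals √9375/(32π).
-/

open Real

theorem one_add_div_rpow_mul_le {r s t : ℝ} (hr : 0 < r) (hs : -r ≤ s) (ht : 0 ≤ t) :
    (1 + s / r) ^ (r * t) ≤ (1 + s / (r + 1)) ^ ((r + 1) * t) := by
  have hs' : -1 ≤ s / r := by rw [le_div_iff₀ hr]; linarith
  have hconc := rpow_one_add_le_one_add_mul_self hs' (p := r / (r + 1)) (by positivity)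
    (div_le_one_of_le₀ (by linarith) (by positivity))
  rw [show r / (r + 1) * (s / r) = s / (r + 1) by field_simp] at hconc
  calc (1 + s / r) ^ (r * t) = ((1 + s / r) ^ (r / (r + 1))) ^ ((r + 1) * t) := by
        rw [← rpow_mul (by linarith)]
        congr 1
        field_simp
    _ ≤ (1 + s / (r + 1)) ^ ((r + 1) * t) :=
        rpow_le_rpow (rpow_nonneg (by linarith) _) hconc (by positivity)

theorem sqrt_9375_div_mul_t4_density_one :
    √9375 / (32 * π) * (3 / 8 * (5 / 4 : ℝ) ^ (-(5 / 2 : ℝ))) =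
      2 / (π * √3) * (4 / 3 : ℝ) ^ (-(2 : ℝ)) := by
  have hsq (y : ℝ) (hy : 0 < y) (e : ℝ) : (y ^ e) ^ 2 = y ^ (2 * e) := by
    rw [mul_comm, rpow_mul hy.le, rpow_two]
  refine (sq_eq_sq₀ (by positivity) (by positivity)).mp ?_
  simp only [mul_pow, div_pow]
  rw [hsq _ (by norm_num), hsq _ (by norm_num), sq_sqrt (by norm_num), sq_sqrt (by norm_num)]
  norm_num
  ring

theorem t3_density_ge_mul_t4_density (x : ℝ) :
    √9375 / (32 * π) * ((3 / 8) * (1 + x ^ 2 / 4) ^ (-(5 / 2 : ℝ))) ≤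
      (2 / (π * √3)) * (1 + x ^ 2 / 3) ^ (-(2 : ℝ)) := by
  have hv : 0 < 1 + (x ^ 2 - 1) / 4 := by nlinarith [sq_nonneg x]
  have hu : 0 < 1 + (x ^ 2 - 1) / 5 := by nlinarith [sq_nonneg x]
  set v := 1 + (x ^ 2 - 1) / 4
  set u := 1 + (x ^ 2 - 1) / 5
  have hvu : v ^ (2 : ℝ) ≤ u ^ (5 / 2 : ℝ) := by
    convert one_add_div_rpow_mul_le (r := 4) (s := x ^ 2 - 1) (t := 1 / 2) (by norm_num)
      (by nlinarith [sq_nonneg x]) (by norm_num) using 2 <;> norm_num [u]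
  rw [show 1 + x ^ 2 / 3 = 4 / 3 * v by ring, show 1 + x ^ 2 / 4 = 5 / 4 * u by ring,
    mul_rpow (by norm_num) hv.le, mul_rpow (by norm_num) hu.le]
  calc √9375 / (32 * π) * (3 / 8 * ((5 / 4) ^ (-(5 / 2 : ℝ)) * u ^ (-(5 / 2 : ℝ))))
      = √9375 / (32 * π) * (3 / 8 * (5 / 4) ^ (-(5 / 2 : ℝ))) * u ^ (-(5 / 2 : ℝ)) := by ring
    _ = 2 / (π * √3) * (4 / 3) ^ (-(2 : ℝ)) * u ^ (-(5 / 2 : ℝ)) := by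
        rw [sqrt_9375_div_mul_t4_density_one]
    _ ≤ 2 / (π * √3) * (4 / 3) ^ (-(2 : ℝ)) * v ^ (-(2 : ℝ)) := by
        gcongr
        rw [rpow_neg hu.le, rpow_neg hv.le]
        exact inv_anti₀ (by positivity) hvu
    _ = 2 / (π * √3) * ((4 / 3) ^ (-(2 : ℝ)) * v ^ (-(2 : ℝ))) := by ring

theorem t3_density_ratio_bound :
    ∀ x : ℝ,
      ((2 / (Real.pi * Real.sqrt 3)) * (1 + x ^ 2 / 3) ^ (-(2 : ℝ))) /
          ((3 / 8) * (1 + x ^ 2 / 4) ^ (-(5 / 2 : ℝ)))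
        ≥ Real.sqrt 9375 / (32 * Real.pi) ∧
      (2 / (Real.pi * Real.sqrt 3)) * (1 + x ^ 2 / 3) ^ (-(2 : ℝ))
        ≥ (Real.sqrt 9375 / (32 * Real.pi)) *
            ((3 / 8) * (1 + x ^ 2 / 4) ^ (-(5 / 2 : ℝ))) := by
  intro x
  have hbound := t3_density_ge_mul_t4_density x
  have hf : 0 < (3 / 8 : ℝ) * (1 + x ^ 2 / 4) ^ (-(5 / 2 : ℝ)) := by positivity
  exact ⟨(le_div_iff₀ hf).2 hbound, hbound⟩
end
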